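/- arXiv:1503.01606 — 2 statements merged into one kernel-verified Lean document; each statement's English description precedes it below -/
import Mathlib

section
/- Let α ∈ (0,∞) be a real number that is not an even positive integer. Then the function F : ℂ → ℂ defined by F(z) = z·|z|^α is not real analytic on ℝ²; more precisely, viewing ℂ as a two-dimensional real normed space, F is not analytic over ℝ at the point 0 (¬ AnalyticAt ℝ F 0). -/
open MeasureTheory Filter Complex
open scoped ENNReal RealInnerProductSpace NNReal

noncomputable section

/-- Gaussian window `g₀(t) = e^{-π|t|²}`. -/
def gaussWin (d : ℕ) (t : EuclideanSpace ℝ (Fin d)) : ℝ :=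
  Real.exp (-Real.pi * ‖t‖ ^ 2)

/-- Short-time Fourier transform with Gaussian window. -/
def STFT (d : ℕ) (f : EuclideanSpace ℝ (Fin d) → ℂ)
    (x w : EuclideanSpace ℝ (Fin d)) : ℂ :=
  ∫ t : EuclideanSpace ℝ (Fin d),
    f t * (gaussWin d (t - x) : ℂ) *
      Complex.exp (-(2 * (Real.pi : ℂ) * Complex.I) * ((⟪w, t⟫ : ℝ) : ℂ))

/-- `L^p`-type norm of an `ℝ≥0∞`-valued function, with essential-sup modification at `p = ∞`. -/
def eLpNormENN {α : Type*} [MeasurableSpace α] (p : ℝ≥0∞) (g : α → ℝ≥0∞)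
    (μ : Measure α) : ℝ≥0∞ :=
  if p = 0 then 0
  else if p = ∞ then essSup g μ
  else (∫⁻ x, g x ^ p.toReal ∂μ) ^ (1 / p.toReal)

/-- Wiener amalgam norm `‖f‖_{W^{p,q}}`. -/
def WienerNorm (d : ℕ) (p q : ℝ≥0∞) (f : EuclideanSpace ℝ (Fin d) → ℂ) : ℝ≥0∞ :=
  eLpNormENN p (fun x => eLpNorm (fun w => STFT d f x w) q volume) volume

/-- Modulation norm `‖f‖_{M^{p,q}}`. -/
def ModNorm (d : ℕ) (p q : ℝ≥0∞) (f : EuclideanSpace ℝ (Fin d) → ℂ) : ℝ≥0∞ :=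
  eLpNormENN q (fun w => eLpNorm (fun x => STFT d f x w) p volume) volume

/-- Fourier transform `f̂(w) = ∫ f(t) e^{-2πi t·w} dt`. -/
def fourierTf (d : ℕ) (f : EuclideanSpace ℝ (Fin d) → ℂ)
    (w : EuclideanSpace ℝ (Fin d)) : ℂ :=
  ∫ t : EuclideanSpace ℝ (Fin d),
    f t * Complex.exp (-(2 * (Real.pi : ℂ) * Complex.I) * ((⟪t, w⟫ : ℝ) : ℂ))

/-- The lattice vector in `ℝ^d` corresponding to `m ∈ ℤ^d`. -/
def latVec (d : ℕ) (m : Fin d → ℤ) : EuclideanSpace ℝ (Fin d) :=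
  WithLp.toLp 2 (fun i => (m i : ℝ))

/-- The unit box `[0,1)^d`. -/
def unitBox (d : ℕ) : Set (EuclideanSpace ℝ (Fin d)) :=
  {x | ∀ i, x i ∈ Set.Ico (0 : ℝ) 1}

/-- Fourier coefficient of (the `ℤ^d`-periodization of) `f`. -/
def fourierCoeffP (d : ℕ) (f : EuclideanSpace ℝ (Fin d) → ℂ) (m : Fin d → ℤ) : ℂ :=
  ∫ x in unitBox d,
    f x * Complex.exp (-(2 * (Real.pi : ℂ) * Complex.I) * ((⟪latVec d m, x⟫ : ℝ) : ℂ))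

/-- `ℤ^d`-periodicity. -/
def ZdPeriodic (d : ℕ) (f : EuclideanSpace ℝ (Fin d) → ℂ) : Prop :=
  ∀ (m : Fin d → ℤ) (x : EuclideanSpace ℝ (Fin d)), f (x + latVec d m) = f x

/-!
Restricted to the real axis, `F` becomes the real-analytic germ `f x = x * |x| ^ α`, which is
`x ^ (α + 1)` for `x > 0`. Writing `f x = x ^ n * g x` with `g 0 ≠ 0`, the limit of
`g x = x ^ (α + 1 - n)` as `x → 0⁺` forces `α + 1 = n`, and then `f = x ^ n` near `0` by the
identity theorem. Since `f` is odd, `n` is odd, so `α = n - 1` is even.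
-/

open Topology

theorem eq_zero_of_tendsto_rpow_nhdsGT_zero {γ c : ℝ} (hc : c ≠ 0)
    (h : Tendsto (fun x : ℝ => x ^ γ) (𝓝[>] 0) (𝓝 c)) : γ = 0 := by
  rcases lt_trichotomy γ 0 with hγ | hγ | hγ
  · exact absurd h (not_tendsto_nhds_of_tendsto_atTop (tendsto_rpow_neg_nhdsGT_zero hγ) c)
  · exact hγ
  · have h0 : Tendsto (fun x : ℝ => x ^ γ) (𝓝[>] 0) (𝓝 0) := by
      simpa [Real.zero_rpow hγ.ne'] using
        (Real.continuousAt_rpow_const 0 γ (Or.inr hγ.le)).tendsto.mono_left nhdsWithin_le_nhds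
    exact absurd (tendsto_nhds_unique h0 h) hc.symm

theorem AnalyticAt.exists_natCast_eq_of_eventuallyEq_rpow {h : ℝ → ℝ} {β : ℝ}
    (hh : AnalyticAt ℝ h 0) (hβ : h =ᶠ[𝓝[>] 0] fun x => x ^ β) :
    ∃ n : ℕ, β = n ∧ h =ᶠ[𝓝 0] fun x => x ^ n := by
  have h_ne_zero : ¬ ∀ᶠ x in 𝓝 0, h x = 0 := fun h_zero => by
    obtain ⟨x, ⟨hx0, hxβ⟩, hx⟩ :=
      ((h_zero.filter_mono nhdsWithin_le_nhds).and hβ).and self_mem_nhdsWithin |>.exists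
    exact (Real.rpow_pos_of_pos hx β).ne' (hxβ.symm.trans hx0)
  obtain ⟨n, g, hg, hg0, hhg⟩ := hh.exists_eventuallyEq_pow_smul_nonzero_iff.mpr h_ne_zero
  have hg_right : g =ᶠ[𝓝[>] 0] fun x => x ^ (β - n) := by
    filter_upwards [hhg.filter_mono nhdsWithin_le_nhds, hβ, self_mem_nhdsWithin]
      with x hx hxβ (hx0 : 0 < x)
    rw [Real.rpow_sub hx0, Real.rpow_natCast, ← hxβ, hx, sub_zero, smul_eq_mul]
    field_simp
  have hβn : β - n = 0 := eq_zero_of_tendsto_rpow_nhdsGT_zero hg0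
    ((hg.continuousAt.tendsto.mono_left nhdsWithin_le_nhds).congr' hg_right)
  refine ⟨n, by linarith, (hh.frequently_eq_iff_eventually_eq (by fun_prop)).mp ?_⟩
  have h_right : ∀ᶠ x in 𝓝[>] 0, h x = x ^ n := by
    filter_upwards [hβ] with x hx
    rw [hx, sub_eq_zero.mp hβn, Real.rpow_natCast]
  exact h_right.frequently.filter_mono (nhdsWithin_mono _ fun x (hx : 0 < x) => hx.ne')

theorem odd_of_neg_pow_eq_neg_pow {R : Type*} [Ring R] [NoZeroDivisors R] [CharZero R]
    {t : R} {n : ℕ} (ht : t ≠ 0) (h : (-t) ^ n = -t ^ n) : Odd n := by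
  refine n.even_or_odd.resolve_left fun hn => ?_
  rw [hn.neg_pow, self_eq_neg] at h
  exact pow_ne_zero n ht h

theorem stmt5 (α : ℝ) (hα : 0 < α) (hne : ∀ k : ℕ, 0 < k → α ≠ 2 * k) :
    ¬ AnalyticAt ℝ (fun z : ℂ => z * ((‖z‖ ^ α : ℝ) : ℂ)) 0 := by
  intro hF
  set f : ℝ → ℝ := fun x => x * |x| ^ α with hf_def
  have hf : AnalyticAt ℝ f 0 := by
    have hF' : AnalyticAt ℝ (fun z : ℂ => z * ((‖z‖ ^ α : ℝ) : ℂ)) ((0 : ℝ) : ℂ) := by simpa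
    simpa [Function.comp_def, hf_def, Complex.norm_real] using
      Complex.reCLM.analyticAt _ |>.comp (hF'.comp (Complex.ofRealCLM.analyticAt 0))
  have hf_right : f =ᶠ[𝓝[>] 0] fun x => x ^ (α + 1) := by
    filter_upwards [self_mem_nhdsWithin] with x (hx : 0 < x)
    show x * |x| ^ α = _
    rw [abs_of_pos hx, Real.rpow_add_one hx.ne']
    ring
  obtain ⟨n, hαn, hfn⟩ := hf.exists_natCast_eq_of_eventuallyEq_rpow hf_right
  have hn_odd : Odd n := by
    have hfn_neg : ∀ᶠ x in 𝓝 0, f (-x) = (-x) ^ n :=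
      (continuous_neg.tendsto' 0 0 neg_zero).eventually hfn
    obtain ⟨t, ⟨ht, ht_neg⟩, (ht_ne : t ≠ 0)⟩ :=
      ((hfn.and hfn_neg).filter_mono (nhdsWithin_le_nhds (s := {0}ᶜ))).and
        self_mem_nhdsWithin |>.exists
    have hf_odd : f (-t) = -f t := by simp only [hf_def, abs_neg]; ring
    rw [ht, ht_neg] at hf_odd
    exact odd_of_neg_pow_eq_neg_pow ht_ne hf_odd
  obtain ⟨k, rfl⟩ := hn_odd
  have hαk : α = 2 * k := by push_cast at hαn; linarith
  exact hne k (by exact_mod_cast (by linarith : (0 : ℝ) < k)) hαk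

end
end

section
/- Let d ≥ 1, let f : ℝ^d → ℂ be integrable, let k : ℝ^d → ℂ be a Schwartz function, and let γ₀ ∈ ℝ^d. For λ > 0 define k_λ(x) = e^{2πi γ₀·x} λ^{-d} k(x/λ). Then ∫_{ℝ^d} | (f*k_λ)(x) − f̂(γ₀) k_λ(x) | dx → 0 as λ → ∞, i.e. the L¹ norm of f*k_λ − f̂(γ₀)k_λ tends to 0. -/
open MeasureTheory Filter Complex
open scoped ENNReal RealInnerProductSpace NNReal

noncomputable section

/-!
Put `g(y) = f(y) e^{-2πi γ₀·y}`, so that `∫ g = f̂(γ₀)`. The modulation `e^{2πi γ₀·x}` factors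
out of the integrand, and it remains to show `‖g * k_λ - (∫ g) k_λ‖₁ → 0` for the unmodulated
dilations `k_λ = λ^{-d} k(·/λ)`, with `g` and `k` merely integrable. Writing the difference as
`∫ g(y) (k_λ(x - y) - k_λ(x)) dy`, Fubini and a change of variables bound its `L¹` norm by
`∫ |g(y)| ω(y/λ) dy`, where `ω(v) = ‖k(· - v) - k‖₁`. Translation is continuous on `L¹`, so
`ω(y/λ) → 0` for every `y`, and `ω ≤ 2‖k‖₁` lets dominated convergence conclude.
-/

open scoped Topology
open Module

def translationModulus {G F : Type*} [AddGroup G] [MeasurableSpace G] [NormedAddCommGroup F]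
    (μ : Measure G) (k : G → F) (v : G) : ℝ :=
  ∫ u, ‖k (u - v) - k u‖ ∂μ

section Translation

variable {G F : Type*} [AddGroup G] [MeasurableSpace G] [NormedAddCommGroup F] {μ : Measure G}
  {k : G → F}

theorem translationModulus_nonneg (v : G) : 0 ≤ translationModulus μ k v :=
  integral_nonneg fun _ => norm_nonneg _

theorem translationModulus_zero : translationModulus μ k 0 = 0 := by
  simp [translationModulus]

theorem translationModulus_le [MeasurableAdd G] [μ.IsAddRightInvariant] (hk : Integrable k μ)
    (v : G) : translationModulus μ k v ≤ 2 * ∫ u, ‖k u‖ ∂μ := by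
  have hkv : Integrable (fun u => k (u - v)) μ := hk.comp_sub_right v
  calc translationModulus μ k v
      ≤ ∫ u, ‖k (u - v)‖ + ‖k u‖ ∂μ :=
        integral_mono (hkv.sub hk).norm (hkv.norm.add hk.norm) fun u => norm_sub_le _ _
    _ = 2 * ∫ u, ‖k u‖ ∂μ := by
        rw [integral_add hkv.norm hk.norm, integral_sub_right_eq_self (fun u => ‖k u‖) v]
        ring

theorem MeasureTheory.Integrable.continuous_translationModulus [TopologicalSpace G]
    [IsTopologicalAddGroup G] [BorelSpace G] [μ.IsAddRightInvariant]
    [μ.InnerRegularCompactLTTop] [IsLocallyFiniteMeasure μ] (hk : Integrable k μ) :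
    Continuous (translationModulus μ k) := by
  let shift : C(G, C(G, G)) := ContinuousMap.curry ⟨fun p : G × G => p.2 - p.1, by fun_prop⟩
  have hshift : ∀ v, MeasurePreserving (shift v) μ μ := fun v => measurePreserving_sub_right μ v
  have hcont := (continuous_const (y := hk.toL1 k)).compMeasurePreservingLp shift.continuous
    hshift ENNReal.one_ne_top
  have heq : ∀ v, ‖Lp.compMeasurePreserving (shift v) (hshift v) (hk.toL1 k) - hk.toL1 k‖ =
      translationModulus μ k v := by
    intro v
    rw [L1.norm_eq_integral_norm]
    refine integral_congr_ae ?_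
    filter_upwards [Lp.coeFn_sub (Lp.compMeasurePreserving (shift v) (hshift v) (hk.toL1 k))
      (hk.toL1 k), Lp.coeFn_compMeasurePreserving (hk.toL1 k) (hshift v),
      (hshift v).quasiMeasurePreserving.ae_eq_comp hk.coeFn_toL1, hk.coeFn_toL1]
      with u h1 h2 h3 h4
    rw [h1, Pi.sub_apply, h2, h4]
    exact congrArg (fun z => ‖z - k u‖) h3
  exact (continuous_congr heq).mp (hcont.sub continuous_const).norm

end Translation

theorem integral_norm_conv_sub_integral_mul_le {G : Type*} [AddGroup G] [MeasurableSpace G]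
    [MeasurableAdd₂ G] [MeasurableNeg G] {μ : Measure G} [SFinite μ] [μ.IsAddRightInvariant]
    {g K : G → ℂ} (hg : Integrable g μ) (hK : Integrable K μ) :
    ∫ x, ‖(∫ y, g y * K (x - y) ∂μ) - (∫ y, g y ∂μ) * K x‖ ∂μ ≤
      ∫ y, ‖g y‖ * translationModulus μ K y ∂μ := by
  have hconv : Integrable (fun p : G × G => g p.2 * K (p.1 - p.2)) (μ.prod μ) :=
    hg.convolution_integrand (ContinuousLinearMap.mul ℂ ℂ) hK
  have hprod : Integrable (fun p : G × G => g p.2 * K p.1) (μ.prod μ) :=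
    (hK.mul_prod hg).congr (ae_of_all _ fun p => mul_comm _ _)
  have hdiff : Integrable (fun p : G × G => g p.2 * (K (p.1 - p.2) - K p.1)) (μ.prod μ) :=
    (hconv.sub hprod).congr (ae_of_all _ fun p => (mul_sub _ _ _).symm)
  have hinner : ∀ᵐ x ∂μ, ∫ y, g y * (K (x - y) - K x) ∂μ =
      (∫ y, g y * K (x - y) ∂μ) - (∫ y, g y ∂μ) * K x := by
    filter_upwards [hconv.prod_right_ae] with x hx
    simp_rw [mul_sub]
    rw [integral_sub hx (hg.mul_const _), integral_mul_const]
  calc ∫ x, ‖(∫ y, g y * K (x - y) ∂μ) - (∫ y, g y ∂μ) * K x‖ ∂μ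
      = ∫ x, ‖∫ y, g y * (K (x - y) - K x) ∂μ‖ ∂μ :=
        integral_congr_ae (hinner.mono fun x hx => congrArg norm hx.symm)
    _ ≤ ∫ x, ∫ y, ‖g y * (K (x - y) - K x)‖ ∂μ ∂μ :=
        integral_mono hdiff.integral_prod_left.norm hdiff.integral_norm_prod_left
          fun x => norm_integral_le_integral_norm _
    _ = ∫ y, ∫ x, ‖g y * (K (x - y) - K x)‖ ∂μ ∂μ := integral_integral_swap hdiff.norm
    _ = ∫ y, ‖g y‖ * translationModulus μ K y ∂μ := by
        simp_rw [norm_mul, integral_const_mul, translationModulus]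

section Dilation

variable {E : Type*} [NormedAddCommGroup E] [NormedSpace ℝ E] [FiniteDimensional ℝ E]
  [MeasurableSpace E] [BorelSpace E] {μ : Measure E} [μ.IsAddHaarMeasure] {g k : E → ℂ}

def dilation (lam : ℝ) (k : E → ℂ) (x : E) : ℂ :=
  (((lam ^ finrank ℝ E)⁻¹ : ℝ) : ℂ) * k (lam⁻¹ • x)

theorem MeasureTheory.Integrable.dilation (hk : Integrable k μ) {lam : ℝ} (hlam : lam ≠ 0) :
    Integrable (dilation lam k) μ :=
  (hk.comp_smul (inv_ne_zero hlam)).const_mul _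

theorem translationModulus_dilation {lam : ℝ} (hlam : 0 < lam) (y : E) :
    translationModulus μ (dilation lam k) y = translationModulus μ k (lam⁻¹ • y) := by
  have hscale : |((lam⁻¹) ^ finrank ℝ E)⁻¹| = lam ^ finrank ℝ E := by
    rw [inv_pow, inv_inv, abs_of_pos (by positivity)]
  simp_rw [translationModulus, dilation, ← mul_sub, norm_mul, Complex.norm_real,
    Real.norm_of_nonneg (by positivity : (0 : ℝ) ≤ (lam ^ finrank ℝ E)⁻¹), integral_const_mul,
    smul_sub]
  rw [Measure.integral_comp_smul μ (fun u => ‖k (u - lam⁻¹ • y) - k u‖), hscale, smul_eq_mul,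
    ← mul_assoc, inv_mul_cancel₀ (by positivity), one_mul]

theorem tendsto_integral_norm_mul_translationModulus_inv_smul (hg : Integrable g μ)
    (hk : Integrable k μ) :
    Tendsto (fun lam : ℝ => ∫ y, ‖g y‖ * translationModulus μ k (lam⁻¹ • y) ∂μ) atTop (𝓝 0) := by
  have hcont := hk.continuous_translationModulus
  have hlim : ∀ y, Tendsto (fun lam : ℝ => ‖g y‖ * translationModulus μ k (lam⁻¹ • y)) atTop
      (𝓝 0) := by
    intro y
    have hshrink : Tendsto (fun lam : ℝ => lam⁻¹ • y) atTop (𝓝 0) := by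
      simpa using (tendsto_inv_atTop_zero (𝕜 := ℝ)).smul_const y
    simpa only [Function.comp_def, translationModulus_zero, mul_zero] using
      ((hcont.tendsto 0).comp hshrink).const_mul ‖g y‖
  have hdom := tendsto_integral_filter_of_dominated_convergence
    (F := fun (lam : ℝ) y => ‖g y‖ * translationModulus μ k (lam⁻¹ • y))
    (fun y => ‖g y‖ * (2 * ∫ u, ‖k u‖ ∂μ))
    (Eventually.of_forall fun lam : ℝ => hg.norm.aestronglyMeasurable.mul
      (hcont.comp (continuous_const_smul lam⁻¹)).aestronglyMeasurable)
    (Eventually.of_forall fun lam : ℝ => ae_of_all _ fun y => by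
      rw [Real.norm_of_nonneg (mul_nonneg (norm_nonneg _) (translationModulus_nonneg _))]
      exact mul_le_mul_of_nonneg_left (translationModulus_le hk _) (norm_nonneg _))
    (hg.norm.mul_const _) (ae_of_all _ hlim)
  simpa only [integral_zero] using hdom

theorem tendsto_integral_norm_conv_dilation_sub (hg : Integrable g μ) (hk : Integrable k μ) :
    Tendsto (fun lam : ℝ => ∫ x, ‖(∫ y, g y * dilation lam k (x - y) ∂μ) -
      (∫ y, g y ∂μ) * dilation lam k x‖ ∂μ) atTop (𝓝 0) := by
  refine tendsto_of_tendsto_of_tendsto_of_le_of_le' tendsto_const_nhds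
    (tendsto_integral_norm_mul_translationModulus_inv_smul hg hk)
    (Eventually.of_forall fun lam => integral_nonneg fun x => norm_nonneg _) ?_
  filter_upwards [eventually_gt_atTop 0] with lam hlam
  simpa only [translationModulus_dilation hlam] using
    integral_norm_conv_sub_integral_mul_le hg (hk.dilation hlam.ne')

end Dilation

theorem norm_exp_two_pi_I_mul_ofReal (a : ℝ) :
    ‖Complex.exp ((2 * (Real.pi : ℂ) * Complex.I) * (a : ℂ))‖ = 1 := by
  simp [Complex.norm_exp]

theorem norm_exp_neg_two_pi_I_mul_ofReal (a : ℝ) :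
    ‖Complex.exp (-(2 * (Real.pi : ℂ) * Complex.I) * (a : ℂ))‖ = 1 := by
  simp [Complex.norm_exp]

section Modulation

variable {E : Type*} [NormedAddCommGroup E] [InnerProductSpace ℝ E] [MeasurableSpace E]
  {μ : Measure E}

theorem norm_integral_modulated_conv_sub (f K : E → ℂ) (γ x : E) :
    ‖(∫ y, f y * (Complex.exp ((2 * (Real.pi : ℂ) * Complex.I) * ((⟪γ, x - y⟫ : ℝ) : ℂ)) *
        K (x - y)) ∂μ) -
      (∫ y, f y * Complex.exp (-(2 * (Real.pi : ℂ) * Complex.I) * ((⟪y, γ⟫ : ℝ) : ℂ)) ∂μ) *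
        (Complex.exp ((2 * (Real.pi : ℂ) * Complex.I) * ((⟪γ, x⟫ : ℝ) : ℂ)) * K x)‖ =
    ‖(∫ y, f y * Complex.exp (-(2 * (Real.pi : ℂ) * Complex.I) * ((⟪y, γ⟫ : ℝ) : ℂ)) *
        K (x - y) ∂μ) -
      (∫ y, f y * Complex.exp (-(2 * (Real.pi : ℂ) * Complex.I) * ((⟪y, γ⟫ : ℝ) : ℂ)) ∂μ) *
        K x‖ := by
  set e : ℂ := Complex.exp ((2 * (Real.pi : ℂ) * Complex.I) * ((⟪γ, x⟫ : ℝ) : ℂ))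
  have hsplit : ∀ y, f y * (Complex.exp ((2 * (Real.pi : ℂ) * Complex.I) *
      ((⟪γ, x - y⟫ : ℝ) : ℂ)) * K (x - y)) =
      e * (f y * Complex.exp (-(2 * (Real.pi : ℂ) * Complex.I) * ((⟪y, γ⟫ : ℝ) : ℂ)) *
        K (x - y)) := by
    intro y
    have hexp : Complex.exp ((2 * (Real.pi : ℂ) * Complex.I) * ((⟪γ, x - y⟫ : ℝ) : ℂ)) =
        e * Complex.exp (-(2 * (Real.pi : ℂ) * Complex.I) * ((⟪y, γ⟫ : ℝ) : ℂ)) := by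
      rw [← Complex.exp_add, inner_sub_right, real_inner_comm γ y]
      push_cast
      ring_nf
    rw [hexp]
    ring
  simp_rw [hsplit, integral_const_mul]
  rw [mul_left_comm _ e, ← mul_sub, norm_mul, norm_exp_two_pi_I_mul_ofReal, one_mul]

end Modulation

theorem stmt19_general (d : ℕ)
    (f : EuclideanSpace ℝ (Fin d) → ℂ) (hfi : Integrable f)
    (k : SchwartzMap (EuclideanSpace ℝ (Fin d)) ℂ)
    (γ₀ : EuclideanSpace ℝ (Fin d)) :
    Filter.Tendsto
      (fun lam : ℝ =>
        ∫ x : EuclideanSpace ℝ (Fin d),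
          ‖(∫ y : EuclideanSpace ℝ (Fin d),
              f y * (Complex.exp ((2 * (Real.pi : ℂ) * Complex.I) *
                  ((⟪γ₀, x - y⟫ : ℝ) : ℂ)) *
                ((((lam ^ d)⁻¹ : ℝ) : ℂ) * k (lam⁻¹ • (x - y))))) -
            fourierTf d f γ₀ *
              (Complex.exp ((2 * (Real.pi : ℂ) * Complex.I) * ((⟪γ₀, x⟫ : ℝ) : ℂ)) *
                ((((lam ^ d)⁻¹ : ℝ) : ℂ) * k (lam⁻¹ • x)))‖)
      Filter.atTop (nhds 0) := by
  have hdemod : Integrable (fun y => f y *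
      Complex.exp (-(2 * (Real.pi : ℂ) * Complex.I) * ((⟪y, γ₀⟫ : ℝ) : ℂ))) :=
    hfi.mul_bdd (by fun_prop) (ae_of_all _ fun y => (norm_exp_neg_two_pi_I_mul_ofReal _).le)
  have key := tendsto_integral_norm_conv_dilation_sub hdemod k.integrable
  simp only [dilation, finrank_euclideanSpace_fin] at key
  refine key.congr fun lam => integral_congr_ae (ae_of_all _ fun x => ?_)
  exact (norm_integral_modulated_conv_sub f (fun z => (((lam ^ d)⁻¹ : ℝ) : ℂ) * k (lam⁻¹ • z)) γ₀
    x).symm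

theorem stmt19 (d : ℕ) (hd : 1 ≤ d)
    (f : EuclideanSpace ℝ (Fin d) → ℂ) (hfi : Integrable f)
    (k : SchwartzMap (EuclideanSpace ℝ (Fin d)) ℂ)
    (γ₀ : EuclideanSpace ℝ (Fin d)) :
    Filter.Tendsto
      (fun lam : ℝ =>
        ∫ x : EuclideanSpace ℝ (Fin d),
          ‖(∫ y : EuclideanSpace ℝ (Fin d),
              f y * (Complex.exp ((2 * (Real.pi : ℂ) * Complex.I) *
                  ((⟪γ₀, x - y⟫ : ℝ) : ℂ)) *
                ((((lam ^ d)⁻¹ : ℝ) : ℂ) * k (lam⁻¹ • (x - y))))) -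
            fourierTf d f γ₀ *
              (Complex.exp ((2 * (Real.pi : ℂ) * Complex.I) * ((⟪γ₀, x⟫ : ℝ) : ℂ)) *
                ((((lam ^ d)⁻¹ : ℝ) : ℂ) * k (lam⁻¹ • x)))‖)
      Filter.atTop (nhds 0) :=
  stmt19_general d f hfi k γ₀
end
end
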